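/- arXiv:1705.04978 — 2 statements merged into one kernel-verified Lean document; each statement's English description precedes it below -/
import Mathlib

section
/- Let n ≥ 0, k ≥ i+1 ≥ 2, and -1 ≤ m ≤ k-(i+1) be integers, and let r, s be positive integers. If m+i+1 = k, then F^i_{r,s}(k, nk+m+i) = s^{n+1} + ∑_{j=0}^{n} r·s^{n-j}·F^i_{r,s}(k, jk+m); if m+i+1 < k, then F^i_{r,s}(k, nk+m+i) = ∑_{j=0}^{n} r·s^{n-j}·F^i_{r,s}(k, jk+m). -/
/-- Auxiliary sequence: `genFibAux i k r s m` equals `F^i_{r,s}(k, m-1)`, i.e. the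
four-parameters sequence indexed by `m = n + 1 ≥ 0`.  For `i ≤ k` the initial values
(`-1 ≤ n ≤ k-2`, i.e. `m < k`) are `r^⌊(n+1)/i⌋`, for `k < i` (`m < i`) they are
`s^⌊(n+1)/k⌋`, and for `n ≥ max{k,i} - 1` the recurrence
`F(n) = r·F(n-i) + s·F(n-k)` holds. -/
def genFibAux (i k r s : ℕ) : ℕ → ℤ
  | m =>
    if m < max (max k i) 1 then
      if i ≤ k then (r : ℤ) ^ (m / i) else (s : ℤ) ^ (m / k)
    else
      r * genFibAux i k r s (m - max i 1) + s * genFibAux i k r s (m - max k 1)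
  termination_by m => m
  decreasing_by all_goals omega

/-- The four-parameters sequence `F^i_{r,s}(k,n)` for integer `n ≥ -1`, with the
convention that it vanishes for `n ≤ -2`. -/
def genFib (i k r s : ℕ) (n : ℤ) : ℤ :=
  if n < -1 then 0 else genFibAux i k r s (n + 1).toNat

lemma genFib_rec (i k r s : ℕ) (hi : 1 ≤ i) (hik : i + 1 ≤ k) (N : ℤ)
    (hN : (k : ℤ) - 1 ≤ N) :
    genFib i k r s N = r * genFib i k r s (N - i) + s * genFib i k r s (N - k) := by
  have h1 : ¬ N < -1 := by omega
  have h2 : ¬ N - i < -1 := by omega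
  have h3 : ¬ N - k < -1 := by omega
  rw [genFib, genFib, genFib, if_neg h1, if_neg h2, if_neg h3, genFibAux]
  have h4 : ¬ (N + 1).toNat < max (max k i) 1 := by omega
  rw [if_neg h4]
  have e1 : (N + 1).toNat - max i 1 = (N - i + 1).toNat := by omega
  have e2 : (N + 1).toNat - max k 1 = (N - k + 1).toNat := by omega
  rw [e1, e2]

lemma genFib_init (i k r s : ℕ) (hik : i ≤ k) (N : ℤ) (h1 : -1 ≤ N) (h2 : N + 1 < k) :
    genFib i k r s N = (r : ℤ) ^ ((N + 1).toNat / i) := by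
  rw [genFib, if_neg (by omega), genFibAux, if_pos (by omega), if_pos hik]

/-- For integers `n ≥ 0`, `k ≥ i+1 ≥ 2`, `-1 ≤ m ≤ k-(i+1)` and
positive integers `r, s`:
if `m+i+1 = k` then `F^i_{r,s}(k, nk+m+i) = s^{n+1} + ∑_{j=0}^{n} r·s^{n-j}·F^i_{r,s}(k, jk+m)`;
if `m+i+1 < k` then `F^i_{r,s}(k, nk+m+i) = ∑_{j=0}^{n} r·s^{n-j}·F^i_{r,s}(k, jk+m)`. -/
theorem genFib_sum_identity' (i k r s : ℕ) (hi : 1 ≤ i) (hik : i + 1 ≤ k)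
    (hr : 0 < r) (hs : 0 < s) (n : ℕ) (m : ℤ) (hm1 : -1 ≤ m)
    (hm2 : m ≤ (k : ℤ) - ((i : ℤ) + 1)) :
    (m + i + 1 = (k : ℤ) →
      genFib i k r s ((n : ℤ) * k + m + i) =
        (s : ℤ) ^ (n + 1) +
          ∑ j ∈ Finset.range (n + 1),
            (r : ℤ) * (s : ℤ) ^ (n - j) * genFib i k r s ((j : ℤ) * k + m)) ∧
    (m + i + 1 < (k : ℤ) →
      genFib i k r s ((n : ℤ) * k + m + i) =
        ∑ j ∈ Finset.range (n + 1),
          (r : ℤ) * (s : ℤ) ^ (n - j) * genFib i k r s ((j : ℤ) * k + m)) := by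
  induction n with
  | zero =>
    simp only [Nat.cast_zero, zero_mul, zero_add, Finset.sum_range_one, Nat.sub_self,
      pow_zero, mul_one, pow_one]
    constructor
    · intro h
      have hrec := genFib_rec i k r s hi hik (m + i) (by omega)
      have e1 : m + (i : ℤ) - i = m := by ring
      have e2 : m + (i : ℤ) - k = -1 := by omega
      rw [e1, e2] at hrec
      have hneg : genFib i k r s (-1) = 1 := by
        rw [genFib_init i k r s (by omega) (-1) (by omega) (by omega)]
        norm_num
      rw [hrec, hneg]
      ring
    · intro h
      have h0 : genFib i k r s (m + i) = (r : ℤ) ^ ((m + i + 1).toNat / i) :=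
        genFib_init i k r s (by omega) _ (by omega) (by omega)
      have h1 : genFib i k r s m = (r : ℤ) ^ ((m + 1).toNat / i) :=
        genFib_init i k r s (by omega) _ (by omega) (by omega)
      rw [h0, h1]
      have e3 : (m + (i : ℤ) + 1).toNat = (m + 1).toNat + i := by omega
      rw [e3, Nat.add_div_right _ hi, pow_succ]
      ring
  | succ n ih =>
    have hnk : (0 : ℤ) ≤ (n : ℤ) * k := by positivity
    have hrec := genFib_rec i k r s hi hik (((n + 1 : ℕ) : ℤ) * k + m + i)
      (by push_cast; push_cast at hnk; nlinarith)
    have e1 : ((n + 1 : ℕ) : ℤ) * k + m + i - i = ((n + 1 : ℕ) : ℤ) * k + m := by ring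
    have e2 : ((n + 1 : ℕ) : ℤ) * k + m + i - k = (n : ℤ) * k + m + i := by
      push_cast; ring
    rw [e1, e2] at hrec
    have hsum : ∑ j ∈ Finset.range (n + 1), (r : ℤ) * (s : ℤ) ^ (n + 1 - j) *
          genFib i k r s ((j : ℤ) * k + m)
        = (s : ℤ) * ∑ j ∈ Finset.range (n + 1), (r : ℤ) * (s : ℤ) ^ (n - j) *
          genFib i k r s ((j : ℤ) * k + m) := by
      rw [Finset.mul_sum]
      refine Finset.sum_congr rfl fun j hj => ?_
      have hjn : j ≤ n := by have := Finset.mem_range.mp hj; omega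
      have hnj : n + 1 - j = (n - j) + 1 := by omega
      rw [hnj, pow_succ]
      ring
    constructor
    · intro h
      rw [hrec, ih.1 h, Finset.sum_range_succ _ (n + 1), hsum, Nat.sub_self, pow_zero]
      ring
    · intro h
      rw [hrec, ih.2 h, Finset.sum_range_succ _ (n + 1), hsum, Nat.sub_self, pow_zero]
      ring
end

section
/- Let n ≥ 0, k > i ≥ 1, and k-i ≤ m < k be integers, and let r, s be positive integers. Then F^i_{r,s}(k, nk+m+i) = u(m) + ∑_{j=0}^{n} r·s^{n-j}·F^i_{r,s}(k, jk+m), where u(m) = s^{n+1} if k-i ≤ m ≤ k-2, and u(m) = r·s^{n+1} if m = k-1. -/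
lemma genFibAux_rec (i k r s N : ℕ) (hi : 1 ≤ i) (hik : i < k) (hN : k ≤ N) :
    genFibAux i k r s N =
      r * genFibAux i k r s (N - i) + s * genFibAux i k r s (N - k) := by
  rw [genFibAux]
  have h1 : max (max k i) 1 = k := by omega
  have h2 : max i 1 = i := by omega
  have h3 : max k 1 = k := by omega
  rw [h1, h2, h3, if_neg (by omega)]

lemma genFibAux_init (i k r s N : ℕ) (hik : i ≤ k) (hN : N < k) (h1 : 1 ≤ k) :
    genFibAux i k r s N = (r : ℤ) ^ (N / i) := by
  rw [genFibAux]
  have hm : max (max k i) 1 = k := by omega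
  rw [hm, if_pos hN, if_pos hik]

lemma genFib_natCast (i k r s t : ℕ) :
    genFib i k r s (t : ℤ) = genFibAux i k r s (t + 1) := by
  rw [genFib, if_neg (by omega), show ((t : ℤ) + 1).toNat = t + 1 by omega]

/-- For integers `n ≥ 0`, `k > i ≥ 1`, `k-i ≤ m < k` and positive
integers `r, s`, `F^i_{r,s}(k, nk+m+i) = u(m) + ∑_{j=0}^{n} r·s^{n-j}·F^i_{r,s}(k, jk+m)`,
where `u(m) = s^{n+1}` if `k-i ≤ m ≤ k-2` and `u(m) = r·s^{n+1}` if `m = k-1`. -/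
theorem genFib_sum_identity'' (i k r s : ℕ) (hi : 1 ≤ i) (hik : i < k)
    (hr : 0 < r) (hs : 0 < s) (n m : ℕ) (hm1 : k - i ≤ m) (hm2 : m < k) :
    genFib i k r s ((n : ℤ) * k + m + i) =
      (if m = k - 1 then (r : ℤ) * (s : ℤ) ^ (n + 1) else (s : ℤ) ^ (n + 1)) +
        ∑ j ∈ Finset.range (n + 1),
          (r : ℤ) * (s : ℤ) ^ (n - j) * genFib i k r s ((j : ℤ) * k + m) := by
  induction n with
  | zero =>
    have e1 : ((0 : ℕ) : ℤ) * k + m + i = ((m + i : ℕ) : ℤ) := by push_cast; ring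
    have e2 : ((0 : ℕ) : ℤ) * k + m = ((m : ℕ) : ℤ) := by push_cast; ring
    rw [e1, genFib_natCast, genFibAux_rec i k r s (m + i + 1) hi hik (by omega)]
    have h4 : m + i + 1 - i = m + 1 := by omega
    rw [h4]
    have h5 : genFibAux i k r s (m + i + 1 - k) =
        (r : ℤ) ^ ((m + i + 1 - k) / i) :=
      genFibAux_init i k r s _ (by omega) (by omega) (by omega)
    rw [h5, Finset.sum_range_one]
    simp only [Nat.cast_zero, zero_mul, zero_add, Nat.sub_zero, pow_zero]
    rw [genFib_natCast]
    by_cases hm : m = k - 1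
    · have : (m + i + 1 - k) / i = 1 := by
        have : m + i + 1 - k = i := by omega
        rw [this, Nat.div_self (by omega)]
      rw [this, if_pos hm]
      push_cast
      ring
    · have : (m + i + 1 - k) / i = 0 := by
        apply Nat.div_eq_of_lt; omega
      rw [this, if_neg hm]
      push_cast
      ring
  | succ n ih =>
    have e1 : ((n + 1 : ℕ) : ℤ) * k + m + i = (((n + 1) * k + m + i : ℕ) : ℤ) := by
      push_cast; ring
    have e2 : ((n + 1 : ℕ) : ℤ) * k + m = (((n + 1) * k + m : ℕ) : ℤ) := by
      push_cast; ring
    have e3 : (n : ℤ) * k + m + i = (((n * k + m + i : ℕ)) : ℤ) := by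
      push_cast; ring
    rw [e1, genFib_natCast, genFibAux_rec i k r s _ hi hik (by nlinarith)]
    have h4 : (n + 1) * k + m + i + 1 - i = (n + 1) * k + m + 1 := by omega
    have h5 : (n + 1) * k + m + i + 1 - k = n * k + m + i + 1 := by ring_nf; omega
    rw [h4, h5, ← genFib_natCast i k r s ((n+1)*k+m), ← genFib_natCast i k r s (n*k+m+i),
      ← e3, ih,
      Finset.sum_range_succ
        (fun j => (r : ℤ) * (s : ℤ) ^ (n + 1 - j) * genFib i k r s ((j : ℤ) * k + m)) (n + 1)]
    have hlast : (r : ℤ) * (s : ℤ) ^ (n + 1 - (n + 1)) *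
        genFib i k r s (((n + 1 : ℕ) : ℤ) * k + m) =
        r * genFib i k r s (((n + 1) * k + m : ℕ) : ℤ) := by
      rw [Nat.sub_self, pow_zero]
      rw [show ((n + 1 : ℕ) : ℤ) * k + m = (((n + 1) * k + m : ℕ) : ℤ) by push_cast; ring]
      ring
    rw [hlast]
    have hsum : ∑ j ∈ Finset.range (n + 1),
        (r : ℤ) * (s : ℤ) ^ (n + 1 - j) * genFib i k r s ((j : ℤ) * k + m) =
        s * ∑ j ∈ Finset.range (n + 1),
        (r : ℤ) * (s : ℤ) ^ (n - j) * genFib i k r s ((j : ℤ) * k + m) := by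
      rw [Finset.mul_sum]
      apply Finset.sum_congr rfl
      intro j hj
      rw [Finset.mem_range] at hj
      have : n + 1 - j = (n - j) + 1 := by omega
      rw [this, pow_succ]
      ring
    rw [hsum]
    by_cases hm : m = k - 1
    · rw [if_pos hm, if_pos hm]; push_cast; ring
    · rw [if_neg hm, if_neg hm]; push_cast; ring
end
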